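/- arXiv:2601.14819 — 5 statements merged into one kernel-verified Lean document; each statement's English description precedes it below -/
import Mathlib

section
/- Let Ψ⁰, Ψ¹ be n×n nonnegative matrices with row sums < 1, and S ⊆ {1,…,n}. Let B^S = (I − Ψ^S)ᵀ and N^S = (I − Ψ^{S^c,swap})ᵀ, where Ψ^S uses action 1 rows on S and action 0 rows on S^c, and Ψ^{S^c,swap} uses action 0 rows on S and action 1 rows on S^c. Set H^S = (B^S)⁻¹ and A^S = H^S N^S. Then the row vector of marginal rewards satisfies (f_S^S, −f_{S^c}^S) = (r_S^1, r_{S^c}^0)·A^S − (r_S^0, r_{S^c}^1), where f^S is defined componentwise as f_i^S = (r_i^1 + (Ψ¹F^S)_i) − (r_i^0 + (Ψ⁰F^S)_i) and F^S = (I − Ψ^S)⁻¹ r^S (column conventions adapted). -/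
open Matrix

/-! For a substochastic `Ψ`, `1 - Ψ` is strictly diagonally dominant, hence invertible, so
`F^S = (1 - Ψ^S)⁻¹ r^S` is the genuine fixed point `F^S = r^S + Ψ^S F^S`. Transposing,
`r^S ᵥ* A^S = (1 - Ψ^{S,swap}) F^S`; row by row this is `F^S - Ψ⁰F^S - r⁰` on `S` and
`F^S - Ψ¹F^S - r¹` off `S`, and substituting the fixed-point equation of that row gives `±f^S`. -/

namespace Matrix

variable {ι : Type*} [Fintype ι]

theorem mulVec_apply_of_apply_eq_ite {R : Type*} [NonUnitalNonAssocSemiring R]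
    {p : ι → Prop} [DecidablePred p] {Ψ Ψ₀ Ψ₁ : Matrix ι ι R}
    (h : ∀ i j, Ψ i j = if p i then Ψ₁ i j else Ψ₀ i j) (v : ι → R) (i : ι) :
    (Ψ *ᵥ v) i = if p i then (Ψ₁ *ᵥ v) i else (Ψ₀ *ᵥ v) i := by
  split_ifs with hi <;> simp [mulVec, dotProduct, h, hi]

variable [DecidableEq ι]

theorem isUnit_det_one_sub_of_nonneg_of_sum_lt_one {Ψ : Matrix ι ι ℝ}
    (hnn : ∀ i j, 0 ≤ Ψ i j) (hrs : ∀ i, ∑ j, Ψ i j < 1) : IsUnit (1 - Ψ).det := by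
  refine isUnit_iff_ne_zero.mpr (det_ne_zero_of_sum_row_lt_diag fun k => ?_)
  have hoff : ∀ j ∈ Finset.univ.erase k, ‖(1 - Ψ) k j‖ = Ψ k j := fun j hj => by
    rw [sub_apply, one_apply_ne (Finset.ne_of_mem_erase hj).symm, zero_sub, norm_neg,
      Real.norm_of_nonneg (hnn k j)]
  have hdiag : ‖(1 - Ψ) k k‖ = 1 - Ψ k k := by
    rw [sub_apply, one_apply_eq, Real.norm_of_nonneg]
    linarith [Finset.single_le_sum (fun j _ => hnn k j) (Finset.mem_univ k), hrs k]
  rw [Finset.sum_congr rfl hoff, hdiag, Finset.sum_erase_eq_sub (Finset.mem_univ k)]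
  linarith [hrs k]

theorem vecMul_transpose_inv_mul_transpose {R : Type*} [CommRing R] (M N : Matrix ι ι R)
    (r : ι → R) : r ᵥ* (Mᵀ⁻¹ * Nᵀ) = N *ᵥ (M⁻¹ *ᵥ r) := by
  rw [← vecMul_vecMul, ← transpose_nonsing_inv, vecMul_transpose, vecMul_transpose]

end Matrix

/-- Lemma 1(e) of the paper, componentwise: with `B^S = (I − Ψ^S)ᵀ`,
`N^S = (I − Ψ^{S,swap})ᵀ`, `H^S = (B^S)⁻¹`, `A^S = H^S N^S`, and marginal
rewards `f_i^S = (r_i¹ + (Ψ¹F^S)_i) − (r_i⁰ + (Ψ⁰F^S)_i)` where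
`F^S = (I − Ψ^S)⁻¹ *ᵥ r^S`, the block row vector `(f_S^S, −f_{S^c}^S)`
equals `(r_S¹, r_{S^c}⁰) ᵥ* A^S − (r_S⁰, r_{S^c}¹)`. -/
theorem stmt4 {n : ℕ} (Ψ0 Ψ1 : Matrix (Fin n) (Fin n) ℝ)
    (h0nn : ∀ i j, 0 ≤ Ψ0 i j) (h1nn : ∀ i j, 0 ≤ Ψ1 i j)
    (h0rs : ∀ i, ∑ j, Ψ0 i j < 1) (h1rs : ∀ i, ∑ j, Ψ1 i j < 1)
    (r0 r1 : Fin n → ℝ) (S : Finset (Fin n))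
    (ΨS Ψswap : Matrix (Fin n) (Fin n) ℝ)
    (hΨS : ∀ i j, ΨS i j = if i ∈ S then Ψ1 i j else Ψ0 i j)
    (hΨswap : ∀ i j, Ψswap i j = if i ∈ S then Ψ0 i j else Ψ1 i j)
    (rAct rPas : Fin n → ℝ)
    (hrAct : ∀ i, rAct i = if i ∈ S then r1 i else r0 i)
    (hrPas : ∀ i, rPas i = if i ∈ S then r0 i else r1 i)
    (B N H A : Matrix (Fin n) (Fin n) ℝ)
    (hB : B = (1 - ΨS)ᵀ) (hN : N = (1 - Ψswap)ᵀ)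
    (hH : H = B⁻¹) (hA : A = H * N)
    (F : Fin n → ℝ) (hF : F = (1 - ΨS)⁻¹.mulVec rAct)
    (f : Fin n → ℝ)
    (hf : ∀ i, f i = (r1 i + Ψ1.mulVec F i) - (r0 i + Ψ0.mulVec F i)) :
    (fun i => if i ∈ S then f i else -f i) = rAct ᵥ* A - rPas := by
  have hSnn : ∀ i j, 0 ≤ ΨS i j := fun i j => by
    rw [hΨS]; split_ifs <;> simp [h0nn, h1nn]
  have hSrs : ∀ i, ∑ j, ΨS i j < 1 := fun i => by
    by_cases hi : i ∈ S <;> simp [hΨS, hi, h0rs, h1rs]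
  have hunit := isUnit_det_one_sub_of_nonneg_of_sum_lt_one hSnn hSrs
  have hfix : (1 - ΨS) *ᵥ F = rAct := by
    rw [hF, mulVec_mulVec, mul_nonsing_inv _ hunit, one_mulVec]
  have hRHS : rAct ᵥ* A = (1 - Ψswap) *ᵥ F := by
    rw [hA, hH, hB, hN, hF, vecMul_transpose_inv_mul_transpose]
  funext i
  have hFi := congrFun hfix i
  simp only [sub_mulVec, one_mulVec, Pi.sub_apply, mulVec_apply_of_apply_eq_ite hΨS,
    hrAct] at hFi
  simp only [Pi.sub_apply, hRHS, sub_mulVec, one_mulVec, mulVec_apply_of_apply_eq_ite hΨswap,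
    hf, hrPas]
  by_cases hi : i ∈ S <;> simp only [hi, if_true, if_false] at hFi ⊢ <;> linarith
end

section
/- Decomposition identity: let Ψ⁰, Ψ¹ be n×n nonnegative matrices with row sums < 1, S ⊆ {1,…,n}, and let π be any policy inducing discounted state–action occupation measures x_j^{a,π} ≥ 0 (for a ∈ {0,1}, j ∈ {1,…,n}) satisfying the balance equations ∑_{a} ( x_j^{a} − ∑_i Ψ^a_{ij} x_i^{a} ) = p_j for all j, where p is a probability vector. Then the reward metric F^π := ∑_{j,a} r_j^a x_j^{a} satisfies F^π = F_p^S − ∑_{j∈S} f_j^S x_j^{0} + ∑_{j∈S^c} f_j^S x_j^{1}, where F_p^S = ∑_j p_j F_j^S, F^S = (I − Ψ^S)⁻¹ r^S, and f_j^S is the marginal reward metric of the S-active policy. -/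
open Matrix

/-- Decomposition identity (Lemma 3(b)): for any nonnegative occupation
measures `(x⁰, x¹)` satisfying the balance equations with initial probability
vector `p`, the reward metric `∑_{j,a} r_j^a x_j^a` equals
`F_p^S − ∑_{j∈S} f_j^S x_j⁰ + ∑_{j∉S} f_j^S x_j¹`. -/
theorem stmt5 {n : ℕ} (Ψ0 Ψ1 : Matrix (Fin n) (Fin n) ℝ)
    (h0nn : ∀ i j, 0 ≤ Ψ0 i j) (h1nn : ∀ i j, 0 ≤ Ψ1 i j)
    (h0rs : ∀ i, ∑ j, Ψ0 i j < 1) (h1rs : ∀ i, ∑ j, Ψ1 i j < 1)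
    (r0 r1 : Fin n → ℝ) (S : Finset (Fin n))
    (ΨS : Matrix (Fin n) (Fin n) ℝ)
    (hΨS : ∀ i j, ΨS i j = if i ∈ S then Ψ1 i j else Ψ0 i j)
    (rS : Fin n → ℝ)
    (hrS : ∀ i, rS i = if i ∈ S then r1 i else r0 i)
    (F : Fin n → ℝ) (hF : F = (1 - ΨS)⁻¹.mulVec rS)
    (f : Fin n → ℝ)
    (hf : ∀ i, f i = (r1 i + Ψ1.mulVec F i) - (r0 i + Ψ0.mulVec F i))
    (p : Fin n → ℝ) (hp : ∀ j, 0 ≤ p j) (hp1 : ∑ j, p j = 1)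
    (x0 x1 : Fin n → ℝ) (hx0 : ∀ j, 0 ≤ x0 j) (hx1 : ∀ j, 0 ≤ x1 j)
    (hbal : ∀ j, (x0 j - ∑ i, Ψ0 i j * x0 i) + (x1 j - ∑ i, Ψ1 i j * x1 i) = p j) :
    ∑ j, (r0 j * x0 j + r1 j * x1 j) =
      (∑ j, p j * F j) - (∑ j ∈ S, f j * x0 j) + ∑ j ∈ Sᶜ, f j * x1 j := by
  have hSnn : ∀ i j, 0 ≤ ΨS i j := by
    intro i j; rw [hΨS]; split
    · exact h1nn i j
    · exact h0nn i j
  have hSrs : ∀ i, ∑ j, ΨS i j < 1 := by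
    intro i
    by_cases h : i ∈ S
    · simpa [hΨS, h] using h1rs i
    · simpa [hΨS, h] using h0rs i
  -- invertibility of 1 - ΨS
  have hdet : (1 - ΨS).det ≠ 0 := by
    apply det_ne_zero_of_sum_row_lt_diag
    intro k
    have hkk : ΨS k k < 1 := by
      calc ΨS k k ≤ ∑ j, ΨS k j :=
        Finset.single_le_sum (fun j _ => hSnn k j) (Finset.mem_univ k)
      _ < 1 := hSrs k
    have h1 : ∑ j ∈ Finset.univ.erase k, ‖(1 - ΨS) k j‖
        = ∑ j ∈ Finset.univ.erase k, ΨS k j := by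
      apply Finset.sum_congr rfl
      intro j hj
      have hjk : j ≠ k := (Finset.mem_erase.mp hj).1
      simp [Matrix.sub_apply, Matrix.one_apply, hjk.symm, abs_of_nonneg (hSnn k j)]
    have h2 : ∑ j ∈ Finset.univ.erase k, ΨS k j = (∑ j, ΨS k j) - ΨS k k := by
      rw [← Finset.sum_erase_add Finset.univ _ (Finset.mem_univ k)]; ring
    have h3 : ‖(1 - ΨS) k k‖ = 1 - ΨS k k := by
      simp [Matrix.sub_apply, Matrix.one_apply, abs_of_nonneg (le_of_lt (sub_pos.mpr hkk))]
    rw [h1, h2, h3]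
    have := hSrs k
    linarith
  -- fixed point equation for F
  have hinv : (1 - ΨS).mulVec F = rS := by
    rw [hF, Matrix.mulVec_mulVec, Matrix.mul_nonsing_inv _ (Ne.isUnit hdet), Matrix.one_mulVec]
  have hfix : ∀ j, F j = rS j + ΨS.mulVec F j := by
    intro j
    have := congrFun hinv j
    rw [Matrix.sub_mulVec, Matrix.one_mulVec] at this
    simp only [Pi.sub_apply] at this
    linarith
  have hSmul : ∀ j, ΨS.mulVec F j =
      if j ∈ S then Ψ1.mulVec F j else Ψ0.mulVec F j := by
    intro j
    simp only [Matrix.mulVec, dotProduct]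
    by_cases h : j ∈ S <;> simp [hΨS, h]
  -- pointwise identities
  have key0 : ∀ j, F j - Ψ0.mulVec F j = r0 j + (if j ∈ S then f j else 0) := by
    intro j
    rw [hfix j, hrS j, hSmul j, hf j]
    by_cases h : j ∈ S <;> simp [h] <;> ring
  have key1 : ∀ j, F j - Ψ1.mulVec F j = r1 j - (if j ∈ S then 0 else f j) := by
    intro j
    rw [hfix j, hrS j, hSmul j, hf j]
    by_cases h : j ∈ S <;> simp [h] <;> ring
  -- sum swap lemmas
  have hswap0 : ∑ j, (∑ i, Ψ0 i j * x0 i) * F j = ∑ i, x0 i * Ψ0.mulVec F i := by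
    simp only [Finset.sum_mul, Matrix.mulVec, dotProduct, Finset.mul_sum]
    rw [Finset.sum_comm]
    exact Finset.sum_congr rfl fun i _ => Finset.sum_congr rfl fun j _ => by ring
  have hswap1 : ∑ j, (∑ i, Ψ1 i j * x1 i) * F j = ∑ i, x1 i * Ψ1.mulVec F i := by
    simp only [Finset.sum_mul, Matrix.mulVec, dotProduct, Finset.mul_sum]
    rw [Finset.sum_comm]
    exact Finset.sum_congr rfl fun i _ => Finset.sum_congr rfl fun j _ => by ring
  have hFp : ∑ j, p j * F j =
      ∑ j, (x0 j * (F j - Ψ0.mulVec F j) + x1 j * (F j - Ψ1.mulVec F j)) := by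
    calc ∑ j, p j * F j
        = ∑ j, (x0 j * F j - (∑ i, Ψ0 i j * x0 i) * F j
            + (x1 j * F j - (∑ i, Ψ1 i j * x1 i) * F j)) := by
          apply Finset.sum_congr rfl
          intro j _
          rw [← hbal j]; ring
      _ = (∑ j, x0 j * F j) - (∑ j, (∑ i, Ψ0 i j * x0 i) * F j)
            + ((∑ j, x1 j * F j) - (∑ j, (∑ i, Ψ1 i j * x1 i) * F j)) := by
          rw [Finset.sum_add_distrib, Finset.sum_sub_distrib, Finset.sum_sub_distrib]
      _ = (∑ j, x0 j * F j) - (∑ j, x0 j * Ψ0.mulVec F j)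
            + ((∑ j, x1 j * F j) - (∑ j, x1 j * Ψ1.mulVec F j)) := by
          rw [hswap0, hswap1]
      _ = ∑ j, (x0 j * (F j - Ψ0.mulVec F j) + x1 j * (F j - Ψ1.mulVec F j)) := by
          rw [Finset.sum_add_distrib]
          simp only [mul_sub]
          rw [Finset.sum_sub_distrib, Finset.sum_sub_distrib]
  have hFp2 : ∑ j, p j * F j = ∑ j, (r0 j * x0 j + r1 j * x1 j)
      + (∑ j, (if j ∈ S then f j * x0 j else 0))
      - (∑ j, (if j ∈ S then 0 else f j * x1 j)) := by
    rw [hFp]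
    rw [← Finset.sum_add_distrib, ← Finset.sum_sub_distrib]
    apply Finset.sum_congr rfl
    intro j _
    rw [key0 j, key1 j]
    by_cases h : j ∈ S <;> simp [h] <;> ring
  have hs0 : ∑ j, (if j ∈ S then f j * x0 j else 0) = ∑ j ∈ S, f j * x0 j := by
    rw [Finset.sum_ite_mem, Finset.univ_inter]
  have hs1 : ∑ j, (if j ∈ S then 0 else f j * x1 j) = ∑ j ∈ Sᶜ, f j * x1 j := by
    rw [Finset.sum_ite, Finset.sum_const_zero, zero_add]
    apply Finset.sum_congr _ (fun _ _ => rfl)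
    ext j; simp
  rw [hFp2, hs0, hs1]
  ring
end

section
/- Under the hypotheses of the decomposition identity, taking π to be the (S ∪ {j})-active policy for j ∉ S yields F_p^{S∪{j}} = F_p^S + f_j^S · x_{p,j}^{1, S∪{j}}, where x_{p,j}^{1,S∪{j}} ≥ 0 is the discounted occupation measure of the active action in state j under the (S∪{j})-active policy with initial distribution p. Analogously, G_p^{S∪{j}} = G_p^S + g_j^S · x_{p,j}^{1,S∪{j}} for the resource metric. -/
/-!
Write `T = insert j S`. Since `F^S` solves `(1 - Ψ^S) F^S = r^S`, the residual
`r^T - (1 - Ψ^T) F^S` vanishes off `j`, and at `j` it is the marginal reward `f_j^S`.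
Hence `F^T - F^S = (1 - Ψ^T)⁻¹ (r^T - (1 - Ψ^T) F^S) = f_j^S (1 - Ψ^T)⁻¹ e_j`, and pairing
with `p` gives `f_j^S x`. The occupation measure `x` is nonnegative because `(1 - Ψ^T)⁻¹`
is entrywise nonnegative, by a discrete maximum principle.
-/

open Matrix

section SubstochasticInverse

variable {ι : Type*} [Fintype ι] [DecidableEq ι] {M : Matrix ι ι ℝ}

theorem isUnit_det_one_sub_of_rowSum_lt_one (hnn : ∀ i k, 0 ≤ M i k)
    (hrs : ∀ i, ∑ k, M i k < 1) : IsUnit (1 - M).det := by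
  refine isUnit_iff_ne_zero.2 (det_ne_zero_of_sum_row_lt_diag fun i => ?_)
  have hdiag : ‖(1 - M) i i‖ = 1 - M i i := by
    rw [Matrix.sub_apply, one_apply_eq, Real.norm_of_nonneg]
    linarith [hrs i, Finset.single_le_sum (fun k _ => hnn i k) (Finset.mem_univ i)]
  have hoff : ∀ k ∈ Finset.univ.erase i, ‖(1 - M) i k‖ = M i k := fun k hk => by
    rw [Matrix.sub_apply, one_apply_ne (Finset.ne_of_mem_erase hk).symm, zero_sub, norm_neg,
      Real.norm_of_nonneg (hnn i k)]
  rw [Finset.sum_congr rfl hoff, hdiag, Finset.sum_erase_eq_sub (Finset.mem_univ i)]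
  linarith [hrs i]

/-- A discrete maximum principle: at a most negative coordinate of `y`, the
row sums of `M` being below one force `((1 - M) *ᵥ y) i < 0`. -/
theorem nonneg_of_one_sub_mulVec_nonneg (hnn : ∀ i k, 0 ≤ M i k)
    (hrs : ∀ i, ∑ k, M i k < 1) {y : ι → ℝ} (hy : ∀ i, 0 ≤ ((1 - M) *ᵥ y) i) (i : ι) :
    0 ≤ y i := by
  by_contra! hneg
  obtain ⟨m, -, hm⟩ := Finset.exists_min_image Finset.univ y ⟨i, Finset.mem_univ i⟩
  have hym : y m < 0 := (hm i (Finset.mem_univ i)).trans_lt hneg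
  have hbound : (∑ k, M m k) * y m ≤ (M *ᵥ y) m := by
    rw [Finset.sum_mul]
    exact Finset.sum_le_sum fun k _ =>
      mul_le_mul_of_nonneg_left (hm k (Finset.mem_univ k)) (hnn m k)
  have hym' := hy m
  rw [sub_mulVec, one_mulVec, Pi.sub_apply] at hym'
  nlinarith [hrs m]

theorem inv_one_sub_nonneg (hnn : ∀ i k, 0 ≤ M i k) (hrs : ∀ i, ∑ k, M i k < 1) (i k : ι) :
    0 ≤ (1 - M)⁻¹ i k := by
  have hcol : (1 - M) *ᵥ ((1 - M)⁻¹ *ᵥ Pi.single k 1) = Pi.single k 1 := by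
    rw [mulVec_mulVec, mul_nonsing_inv _ (isUnit_det_one_sub_of_rowSum_lt_one hnn hrs),
      one_mulVec]
  have hsingle : (0 : ι → ℝ) ≤ Pi.single k 1 := Pi.single_nonneg.2 zero_le_one
  have := nonneg_of_one_sub_mulVec_nonneg hnn hrs (fun l => hcol ▸ hsingle l) i
  simpa [mulVec_single] using this

end SubstochasticInverse

/-- The transition matrix `Ψ^T` of the policy that is active exactly on `T`. -/
def Matrix.piecewiseRows {m n α : Type*} (T : Finset m) [DecidablePred (· ∈ T)]
    (P₁ P₀ : Matrix m n α) : Matrix m n α :=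
  of fun i k => if i ∈ T then P₁ i k else P₀ i k

theorem Matrix.piecewiseRows_mulVec {m n α : Type*} [Fintype n] [NonUnitalNonAssocSemiring α]
    (T : Finset m) [DecidablePred (· ∈ T)] (P₁ P₀ : Matrix m n α) (v : n → α) :
    piecewiseRows T P₁ P₀ *ᵥ v = T.piecewise (P₁ *ᵥ v) (P₀ *ᵥ v) := by
  ext i
  by_cases hi : i ∈ T <;> simp [piecewiseRows, mulVec, dotProduct, hi]

section PolicyDecomposition

variable {ι : Type*} [Fintype ι] [DecidableEq ι]

theorem inv_mulVec_sub (A : Matrix ι ι ℝ) (hA : IsUnit A.det) (r v : ι → ℝ) :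
    A⁻¹ *ᵥ r - v = A⁻¹ *ᵥ (r - A *ᵥ v) := by
  rw [mulVec_sub, mulVec_mulVec, nonsing_inv_mul _ hA, one_mulVec]

theorem dotProduct_inv_mulVec_single (A : Matrix ι ι ℝ) (p : ι → ℝ) (j : ι) (c : ℝ) :
    p ⬝ᵥ (A⁻¹ *ᵥ Pi.single j c) = c * ((Aᵀ)⁻¹ *ᵥ p) j := by
  rw [dotProduct_mulVec, dotProduct_single, ← transpose_nonsing_inv, mulVec_transpose, mul_comm]

theorem piecewise_insert_sub_one_sub_mulVec {P₁ P₀ : Matrix ι ι ℝ} {r₁ r₀ v : ι → ℝ}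
    {S : Finset ι} (hv : (1 - piecewiseRows S P₁ P₀) *ᵥ v = S.piecewise r₁ r₀)
    {j : ι} (hj : j ∉ S) :
    (insert j S).piecewise r₁ r₀ - (1 - piecewiseRows (insert j S) P₁ P₀) *ᵥ v =
      Pi.single j ((r₁ j + (P₁ *ᵥ v) j) - (r₀ j + (P₀ *ᵥ v) j)) := by
  rw [sub_mulVec, one_mulVec, piecewiseRows_mulVec] at hv ⊢
  ext i
  have hvi := congrFun hv i
  by_cases hij : i = j
  · subst hij
    simp only [Pi.sub_apply, Finset.piecewise_eq_of_notMem _ _ _ hj] at hvi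
    simp only [Pi.sub_apply, Finset.piecewise_insert, Function.update_self, Pi.single_eq_same]
    linarith
  · simp only [Pi.sub_apply] at hvi
    simp only [Pi.sub_apply, Finset.piecewise_insert, Function.update_of_ne hij,
      Pi.single_eq_of_ne hij]
    linarith

theorem dotProduct_inv_piecewiseRows_insert {P₁ P₀ : Matrix ι ι ℝ} {r₁ r₀ v : ι → ℝ}
    {S : Finset ι} (hv : (1 - piecewiseRows S P₁ P₀) *ᵥ v = S.piecewise r₁ r₀)
    {j : ι} (hj : j ∉ S) (hT : IsUnit (1 - piecewiseRows (insert j S) P₁ P₀).det)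
    (p : ι → ℝ) :
    p ⬝ᵥ ((1 - piecewiseRows (insert j S) P₁ P₀)⁻¹ *ᵥ (insert j S).piecewise r₁ r₀) =
      p ⬝ᵥ v + ((r₁ j + (P₁ *ᵥ v) j) - (r₀ j + (P₀ *ᵥ v) j)) *
        (((1 - piecewiseRows (insert j S) P₁ P₀)ᵀ)⁻¹ *ᵥ p) j := by
  rw [← dotProduct_inv_mulVec_single, ← piecewise_insert_sub_one_sub_mulVec hv hj,
    ← inv_mulVec_sub _ hT, dotProduct_sub, add_sub_cancel]

end PolicyDecomposition

theorem stmt6_general {n : ℕ} (Ψ0 Ψ1 : Matrix (Fin n) (Fin n) ℝ)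
    (h0nn : ∀ i j, 0 ≤ Ψ0 i j) (h1nn : ∀ i j, 0 ≤ Ψ1 i j)
    (h0rs : ∀ i, ∑ j, Ψ0 i j < 1) (h1rs : ∀ i, ∑ j, Ψ1 i j < 1)
    (r0 r1 q0 q1 : Fin n → ℝ)
    (p : Fin n → ℝ) (hp : ∀ k, 0 ≤ p k)
    (Ψ : Finset (Fin n) → Matrix (Fin n) (Fin n) ℝ)
    (hΨ : ∀ T i k, Ψ T i k = if i ∈ T then Ψ1 i k else Ψ0 i k)
    (F G : Finset (Fin n) → Fin n → ℝ)
    (hF : ∀ T, F T = (1 - Ψ T)⁻¹.mulVec (fun i => if i ∈ T then r1 i else r0 i))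
    (hG : ∀ T, G T = (1 - Ψ T)⁻¹.mulVec (fun i => if i ∈ T then q1 i else q0 i))
    (f g : Finset (Fin n) → Fin n → ℝ)
    (hf : ∀ T i, f T i = (r1 i + Ψ1.mulVec (F T) i) - (r0 i + Ψ0.mulVec (F T) i))
    (hg : ∀ T i, g T i = (q1 i + Ψ1.mulVec (G T) i) - (q0 i + Ψ0.mulVec (G T) i))
    (S : Finset (Fin n)) (j : Fin n) (hj : j ∉ S)
    (x : ℝ) (hx : x = ((1 - Ψ (insert j S))ᵀ)⁻¹.mulVec p j) :
    0 ≤ x ∧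
      (∑ k, p k * F (insert j S) k) = (∑ k, p k * F S k) + f S j * x ∧
      (∑ k, p k * G (insert j S) k) = (∑ k, p k * G S k) + g S j * x := by
  have hΨrows : ∀ T, Ψ T = piecewiseRows T Ψ1 Ψ0 := fun T => Matrix.ext (hΨ T)
  have hnn : ∀ T i k, 0 ≤ Ψ T i k := fun T i k => by
    rw [hΨ]; split_ifs <;> apply_assumption
  have hrs : ∀ T i, ∑ k, Ψ T i k < 1 := fun T i => by
    simp only [hΨ]; split_ifs <;> apply_assumption
  have hunit T := isUnit_det_one_sub_of_rowSum_lt_one (hnn T) (hrs T)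
  have hvalue (r₁ r₀ : Fin n → ℝ) (V : Finset (Fin n) → Fin n → ℝ)
      (hV : ∀ T, V T = (1 - Ψ T)⁻¹ *ᵥ T.piecewise r₁ r₀) :
      p ⬝ᵥ V (insert j S) =
        p ⬝ᵥ V S + ((r₁ j + (Ψ1 *ᵥ V S) j) - (r₀ j + (Ψ0 *ᵥ V S) j)) * x := by
    have hfix : (1 - piecewiseRows S Ψ1 Ψ0) *ᵥ V S = S.piecewise r₁ r₀ := by
      rw [← hΨrows, hV S, mulVec_mulVec, mul_nonsing_inv _ (hunit S), one_mulVec]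
    rw [hV (insert j S), hx, hΨrows]
    exact dotProduct_inv_piecewiseRows_insert hfix hj (hΨrows _ ▸ hunit _) p
  refine ⟨?_, (hvalue r1 r0 F hF).trans (by rw [hf]; rfl),
    (hvalue q1 q0 G hG).trans (by rw [hg]; rfl)⟩
  rw [hx, ← transpose_nonsing_inv, mulVec_transpose, vecMul, dotProduct]
  exact Finset.sum_nonneg fun k _ =>
    mul_nonneg (hp k) (inv_one_sub_nonneg (hnn (insert j S)) (hrs _) k j)

/-- Lemma 4(a): for `j ∉ S`, `F_p^{S∪{j}} = F_p^S + f_j^S · x_{p,j}^{1,S∪{j}}`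
and `G_p^{S∪{j}} = G_p^S + g_j^S · x_{p,j}^{1,S∪{j}}`, where
`x_{p,j}^{1,S∪{j}} = (H^{S∪{j}} *ᵥ p)_j ≥ 0` is the discounted occupation
measure of the active action at `j` under the `(S∪{j})`-active policy. -/
theorem stmt6 {n : ℕ} (Ψ0 Ψ1 : Matrix (Fin n) (Fin n) ℝ)
    (h0nn : ∀ i j, 0 ≤ Ψ0 i j) (h1nn : ∀ i j, 0 ≤ Ψ1 i j)
    (h0rs : ∀ i, ∑ j, Ψ0 i j < 1) (h1rs : ∀ i, ∑ j, Ψ1 i j < 1)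
    (r0 r1 q0 q1 : Fin n → ℝ)
    (p : Fin n → ℝ) (hp : ∀ k, 0 ≤ p k) (hp1 : ∑ k, p k = 1)
    (Ψ : Finset (Fin n) → Matrix (Fin n) (Fin n) ℝ)
    (hΨ : ∀ T i k, Ψ T i k = if i ∈ T then Ψ1 i k else Ψ0 i k)
    (F G : Finset (Fin n) → Fin n → ℝ)
    (hF : ∀ T, F T = (1 - Ψ T)⁻¹.mulVec (fun i => if i ∈ T then r1 i else r0 i))
    (hG : ∀ T, G T = (1 - Ψ T)⁻¹.mulVec (fun i => if i ∈ T then q1 i else q0 i))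
    (f g : Finset (Fin n) → Fin n → ℝ)
    (hf : ∀ T i, f T i = (r1 i + Ψ1.mulVec (F T) i) - (r0 i + Ψ0.mulVec (F T) i))
    (hg : ∀ T i, g T i = (q1 i + Ψ1.mulVec (G T) i) - (q0 i + Ψ0.mulVec (G T) i))
    (S : Finset (Fin n)) (j : Fin n) (hj : j ∉ S)
    (x : ℝ) (hx : x = ((1 - Ψ (insert j S))ᵀ)⁻¹.mulVec p j) :
    0 ≤ x ∧
      (∑ k, p k * F (insert j S) k) = (∑ k, p k * F S k) + f S j * x ∧
      (∑ k, p k * G (insert j S) k) = (∑ k, p k * G S k) + g S j * x :=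
  stmt6_general Ψ0 Ψ1 h0nn h1nn h0rs h1rs r0 r1 q0 q1 p hp Ψ hΨ F G hF hG f g hf hg S j hj x hx
end

section
/- Block pivot identity: let A be an n×n real matrix, let j be an index with A_{jj} ≠ 0, and let T ⊆ {1,…,n}\{j}. Then the Schur-type update A'_{T,T} := A_{T,T} − A_{jj}⁻¹ A_{T,j} A_{j,T} equals the (T,T) block of the matrix obtained from A by a simplex pivot on entry (j,j); moreover, if A = B⁻¹N for invertible B, then A'_{T,T} = ((B')⁻¹N')_{T,T}, where (B', N') are obtained from (B, N) by swapping the j-th columns of B and N. -/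
/-!
Pivoting on `(j, j)` replaces `B` by `B' = B E`, where the eta matrix `E` is the identity with
its `j`-th column replaced by the `j`-th column of `A = B⁻¹ N`; thus `det B' = det B · A j j`.
Off column `j`, the matrix `N'` agrees with `N`, so the tableau `X = B'⁻¹ N'` solves
`E X = B⁻¹ N'`, whose columns `k ≠ j` are those of `A`. Row `j` of this system reads
`A j j · X j k = A j k`, and row `i ≠ j` reads `X i k + A i j · X j k = A i k`; eliminating
`X j k` gives the Schur-type update.
-/

open Matrix

namespace Matrix

variable {K n : Type*} [Fintype n] [DecidableEq n]

theorem updateCol_one_mul_apply [Semiring K] (j : n) (v : n → K) (M : Matrix n n K) (i k : n) :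
    (updateCol 1 j v * M) i k = (if i = j then 0 else M i k) + v i * M j k := by
  rw [mul_apply, ← Finset.add_sum_erase _ _ (Finset.mem_univ j), add_comm]
  congr 1
  · rw [Finset.sum_congr rfl fun l hl => by
      rw [updateCol_ne (Finset.ne_of_mem_erase hl), one_apply, ite_mul, zero_mul]]
    simp [Finset.sum_ite_eq, Finset.mem_erase, eq_comm]
  · rw [updateCol_self]

theorem det_updateCol_one [CommRing K] (j : n) (v : n → K) : (updateCol 1 j v).det = v j := by
  simpa [one_apply] using det_updateCol_sum (1 : Matrix n n K) j v

theorem apply_eq_of_updateCol_one_mul_eq [Field K] {j : n} {v : n → K} {X C : Matrix n n K}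
    (h : updateCol 1 j v * X = C) (hv : v j ≠ 0) {i : n} (hi : i ≠ j) (k : n) :
    X i k = C i k - v i * C j k / v j := by
  have hrow_j : v j * X j k = C j k := by
    simpa [updateCol_one_mul_apply] using congr_fun₂ h j k
  have hrow_i : X i k + v i * X j k = C i k := by
    simpa [updateCol_one_mul_apply, hi] using congr_fun₂ h i k
  rw [← hrow_i, ← hrow_j]
  field_simp
  ring

variable [Field K] {B N : Matrix n n K} {j : n}

theorem updateCol_eq_mul_updateCol_one (hB : IsUnit B.det) :
    B.updateCol j (fun i => N i j) = B * updateCol 1 j (fun i => (B⁻¹ * N) i j) := by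
  rw [mul_updateCol, mul_one]
  congr 1
  funext i
  change _ = (B * (B⁻¹ * N)) i j
  rw [mul_nonsing_inv_cancel_left _ _ hB]

theorem isUnit_det_updateCol_of_pivot_ne_zero (hB : IsUnit B.det) (hjj : (B⁻¹ * N) j j ≠ 0) :
    IsUnit (B.updateCol j fun i => N i j).det := by
  rw [updateCol_eq_mul_updateCol_one hB, det_mul, det_updateCol_one]
  exact hB.mul hjj.isUnit

theorem inv_updateCol_mul_updateCol_apply (hB : IsUnit B.det) (hjj : (B⁻¹ * N) j j ≠ 0)
    {i k : n} (hi : i ≠ j) (hk : k ≠ j) :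
    ((B.updateCol j fun l => N l j)⁻¹ * N.updateCol j fun l => B l j) i k =
      (B⁻¹ * N) i k - (B⁻¹ * N) i j * (B⁻¹ * N) j k / (B⁻¹ * N) j j := by
  have hE : IsUnit (updateCol 1 j fun l => (B⁻¹ * N) l j).det := by
    rw [det_updateCol_one]
    exact hjj.isUnit
  have hsystem : (updateCol 1 j fun l => (B⁻¹ * N) l j) * ((B.updateCol j fun l => N l j)⁻¹ * N.updateCol j fun l => B l j) =
      B⁻¹ * N.updateCol j fun l => B l j := by
    rw [updateCol_eq_mul_updateCol_one hB, mul_inv_rev, ← mul_assoc, ← mul_assoc,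
      mul_nonsing_inv _ hE, one_mul]
  rw [apply_eq_of_updateCol_one_mul_eq hsystem hjj hi, mul_updateCol, updateCol_ne hk,
    updateCol_ne hk]

end Matrix

/-- Block pivot identity: if `A = B⁻¹N` with `B` invertible and `A j j ≠ 0`,
and `B', N'` are obtained by swapping the `j`-th columns of `B` and `N`, then
`B'` is invertible and, on any index set `T` avoiding `j`, the `(T,T)` block of
the pivoted tableau `(B')⁻¹N'` is given by the Schur-type update
`A i k − A i j · A j k / A j j`. -/
theorem stmt8 {n : ℕ} (B N : Matrix (Fin n) (Fin n) ℝ)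
    (hB : IsUnit B) (A : Matrix (Fin n) (Fin n) ℝ) (hA : A = B⁻¹ * N)
    (j : Fin n) (hjj : A j j ≠ 0)
    (T : Set (Fin n)) (hT : j ∉ T)
    (B' N' : Matrix (Fin n) (Fin n) ℝ)
    (hB' : ∀ i k, B' i k = if k = j then N i k else B i k)
    (hN' : ∀ i k, N' i k = if k = j then B i k else N i k) :
    IsUnit B' ∧
      ∀ i ∈ T, ∀ k ∈ T,
        ((B')⁻¹ * N') i k = A i k - A i j * A j k / A j j := by
  have hBdet : IsUnit B.det := (isUnit_iff_isUnit_det B).mp hB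
  have hB'col : B' = B.updateCol j fun i => N i j := by
    ext i k
    rw [hB', updateCol_apply]
    split_ifs with hk
    exacts [hk ▸ rfl, rfl]
  have hN'col : N' = N.updateCol j fun i => B i j := by
    ext i k
    rw [hN', updateCol_apply]
    split_ifs with hk
    exacts [hk ▸ rfl, rfl]
  subst hA hB'col hN'col
  refine ⟨(isUnit_iff_isUnit_det _).mpr (isUnit_det_updateCol_of_pivot_ne_zero hBdet hjj),
    fun i hi k hk => ?_⟩
  exact inv_updateCol_mul_updateCol_apply hBdet hjj (ne_of_mem_of_not_mem hi hT)
    (ne_of_mem_of_not_mem hk hT)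
end

section
/- Initialization-system correctness: let Ψ⁰, Ψ¹ be the transition-transform matrices (nonnegative, row sums ψ_i^a = ∑_j ψ_{ij}^a ≤ ψ̄ < 1), and let A∅ᵀ(I − Ψ⁰) = (I − Ψ¹), i.e., A∅ = ((I−Ψ⁰)ᵀ)⁻¹(I−Ψ¹)ᵀ. Fix any state j*, set m̃_i^a := (1 − ψ_i^a)/α, and form the n×n block system A∅ᵀ·[ (I−Ψ⁰)_{·,N\{j*}} , m̃⁰ ] = [ (I−Ψ¹)_{·,N\{j*}} , m̃¹ ] (columns of I−Ψ⁰ except column j*, plus column m̃⁰). Then A∅ is the unique solution of this block system. -/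
/-!
Replacing column `j*` of `I − Ψ⁰` by `m̃⁰ = (I − Ψ⁰)·(α⁻¹, …, α⁻¹)` is a column operation: it
multiplies the determinant by `α⁻¹`, and it commutes with left multiplication, so
`A∅ᵀ (I − Ψ⁰) = I − Ψ¹` turns into the block system. Row sums below `1` make `I − Ψ⁰` strictly
diagonally dominant, hence invertible, so the block matrix is invertible and the solution unique.
-/

open Matrix Finset

namespace Matrix

variable {n : Type*} [Fintype n] [DecidableEq n]

theorem det_one_sub_ne_zero_of_sum_norm_lt_one {K : Type*} [NormedField K] (Ψ : Matrix n n K)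
    (h : ∀ i, ∑ j, ‖Ψ i j‖ < 1) : (1 - Ψ).det ≠ 0 := by
  refine det_ne_zero_of_sum_row_lt_diag fun k => ?_
  calc ∑ j ∈ univ.erase k, ‖(1 - Ψ) k j‖
      = ∑ j ∈ univ.erase k, ‖Ψ k j‖ := sum_congr rfl fun j hj => by
        rw [sub_apply, one_apply_ne' (ne_of_mem_erase hj), zero_sub, norm_neg]
    _ = ∑ j, ‖Ψ k j‖ - ‖Ψ k k‖ := sum_erase_eq_sub (mem_univ k)
    _ < 1 - ‖Ψ k k‖ := by linarith [h k]
    _ ≤ ‖1 - Ψ k k‖ := by simpa using norm_sub_norm_le (1 : K) (Ψ k k)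
    _ = ‖(1 - Ψ) k k‖ := by rw [sub_apply, one_apply_eq]

theorem det_updateCol_mulVec {R : Type*} [CommRing R] (A : Matrix n n R) (j : n) (c : n → R) :
    (A.updateCol j (A *ᵥ c)).det = c j * A.det := by
  rw [← smul_eq_mul, ← det_updateCol_sum A j c]
  congr 2
  ext k
  simp only [mulVec, dotProduct, smul_eq_mul, mul_comm]

theorem one_sub_mulVec_const {R : Type*} [Ring R] (Ψ : Matrix n n R) (c : R) (i : n) :
    ((1 - Ψ) *ᵥ fun _ => c) i = (1 - ∑ j, Ψ i j) * c := by
  rw [mulVec, dotProduct, ← sum_mul]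
  simp [sum_sub_distrib, one_apply]

end Matrix

theorem stmt12_general {n : ℕ} (Ψ0 Ψ1 : Matrix (Fin n) (Fin n) ℝ)
    (h0nn : ∀ i j, 0 ≤ Ψ0 i j)
    (ψbar : ℝ) (hψbar : ψbar < 1)
    (h0rs : ∀ i, ∑ j, Ψ0 i j ≤ ψbar)
    (α : ℝ) (hα : 0 < α) (jstar : Fin n)
    (m0 m1 : Fin n → ℝ)
    (hm0 : ∀ i, m0 i = (1 - ∑ j, Ψ0 i j) / α)
    (hm1 : ∀ i, m1 i = (1 - ∑ j, Ψ1 i j) / α)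
    (A : Matrix (Fin n) (Fin n) ℝ)
    (hA : A = ((1 - Ψ0)ᵀ)⁻¹ * (1 - Ψ1)ᵀ)
    (M0 M1 : Matrix (Fin n) (Fin n) ℝ)
    (hM0 : ∀ i k, M0 i k = if k = jstar then m0 i else (1 - Ψ0) i k)
    (hM1 : ∀ i k, M1 i k = if k = jstar then m1 i else (1 - Ψ1) i k) :
    Aᵀ * M0 = M1 ∧ ∀ X : Matrix (Fin n) (Fin n) ℝ, Xᵀ * M0 = M1 → X = A := by
  have hP0 : IsUnit (1 - Ψ0).det := isUnit_iff_ne_zero.mpr <|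
    det_one_sub_ne_zero_of_sum_norm_lt_one Ψ0 fun i => by
      simpa only [Real.norm_of_nonneg (h0nn i _)] using (h0rs i).trans_lt hψbar
  have hcol : ∀ (Ψ M : Matrix (Fin n) (Fin n) ℝ) (m : Fin n → ℝ),
      (∀ i, m i = (1 - ∑ j, Ψ i j) / α) →
      (∀ i k, M i k = if k = jstar then m i else (1 - Ψ) i k) →
      M = (1 - Ψ).updateCol jstar ((1 - Ψ) *ᵥ fun _ => α⁻¹) := fun Ψ M m hm hM => by
    ext i k
    rw [hM, updateCol_apply, hm, one_sub_mulVec_const, div_eq_mul_inv]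
  have hAP0 : Aᵀ * (1 - Ψ0) = 1 - Ψ1 := by
    rw [hA, transpose_mul, transpose_transpose, transpose_nonsing_inv, transpose_transpose,
      nonsing_inv_mul_cancel_right _ _ hP0]
  have hM0unit : IsUnit M0 := by
    rw [isUnit_iff_isUnit_det, hcol Ψ0 M0 m0 hm0 hM0, det_updateCol_mulVec]
    exact (isUnit_iff_ne_zero.mpr (inv_ne_zero hα.ne')).mul hP0
  have hsol : Aᵀ * M0 = M1 := by
    rw [hcol Ψ0 M0 m0 hm0 hM0, hcol Ψ1 M1 m1 hm1 hM1, mul_updateCol, mulVec_mulVec, hAP0]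
  exact ⟨hsol, fun X hX => transpose_injective (hM0unit.mul_left_injective (hX.trans hsol.symm))⟩

/-- Initialization-system correctness: with `A∅ = ((I−Ψ⁰)ᵀ)⁻¹(I−Ψ¹)ᵀ`,
row sums `ψ_i^a ≤ ψ̄ < 1`, `m̃_i^a = (1 − ψ_i^a)/α`, and the block system
obtained by replacing column `j*` of `I−Ψ^a` by `m̃^a`, the matrix `A∅` is the
unique solution `X` of `Xᵀ·M⁰ = M¹`. -/
theorem stmt12 {n : ℕ} (Ψ0 Ψ1 : Matrix (Fin n) (Fin n) ℝ)
    (h0nn : ∀ i j, 0 ≤ Ψ0 i j) (h1nn : ∀ i j, 0 ≤ Ψ1 i j)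
    (ψbar : ℝ) (hψbar : ψbar < 1)
    (h0rs : ∀ i, ∑ j, Ψ0 i j ≤ ψbar) (h1rs : ∀ i, ∑ j, Ψ1 i j ≤ ψbar)
    (α : ℝ) (hα : 0 < α) (jstar : Fin n)
    (m0 m1 : Fin n → ℝ)
    (hm0 : ∀ i, m0 i = (1 - ∑ j, Ψ0 i j) / α)
    (hm1 : ∀ i, m1 i = (1 - ∑ j, Ψ1 i j) / α)
    (A : Matrix (Fin n) (Fin n) ℝ)
    (hA : A = ((1 - Ψ0)ᵀ)⁻¹ * (1 - Ψ1)ᵀ)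
    (M0 M1 : Matrix (Fin n) (Fin n) ℝ)
    (hM0 : ∀ i k, M0 i k = if k = jstar then m0 i else (1 - Ψ0) i k)
    (hM1 : ∀ i k, M1 i k = if k = jstar then m1 i else (1 - Ψ1) i k) :
    Aᵀ * M0 = M1 ∧ ∀ X : Matrix (Fin n) (Fin n) ℝ, Xᵀ * M0 = M1 → X = A :=
  stmt12_general Ψ0 Ψ1 h0nn ψbar hψbar h0rs α hα jstar m0 m1 hm0 hm1 A hA M0 M1 hM0 hM1
end
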